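/- For a (k+2,k,z) system using Staircase codes (n = k+2, up to two stragglers), the cumulative distribution function of the Master's waiting time satisfies, for all t > 0: F_{T_SC}(t) = F(t_{k+2})^{k+2} + (k+2)·(1 − F(t_{k+2}))·[ F(t_{k+1})^{k+1} + (k+1)·F(t_k)^k·( (1 − F(t_{k+1})) − (1/2)(1 − F(t_{k+2})) ) ], where F(s) = 1 − exp(−λ(k−z)s) for s ≥ 0 (and F(s)=0 for s<0), and t_i = max{ ((i−z)/(k−z))·(t − c/(i−z)), 0 } for i = k, k+1, k+2. -/

import Mathlib

open MeasureTheory ProbabilityTheory Real Finset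

/-- The `d`-th order statistic (the `d`-th smallest value, `1`-indexed) of the
values `f 0, …, f (n-1)`. -/
noncomputable def orderStat {n : ℕ} (f : Fin n → ℝ) (d : ℕ) : ℝ :=
  ((List.ofFn f).insertionSort (· ≤ ·)).getD (d - 1) 0

/-- The `m`-th harmonic number `H_m = ∑_{i=1}^m 1/i` (with `H_0 = 0`), as a real number. -/
noncomputable def harmonic' (m : ℕ) : ℝ := ∑ i ∈ Finset.range m, (1 : ℝ) / (i + 1)

/-- The Master's waiting time under Staircase codes:
`T_SC = min_{d ∈ {k,…,n}} ((k-z)/(d-z)) ⬝ T_(d)`, where the service times are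
`T i = c/(k-z) + T' i`. -/
noncomputable def TSC (n k z : ℕ) (hkn : k ≤ n) (c : ℝ) (T' : Fin n → ℝ) : ℝ :=
  (Finset.Icc k n).inf' (Finset.nonempty_Icc.mpr hkn) fun d =>
    ((k : ℝ) - z) / ((d : ℝ) - z) *
      orderStat (fun i => c / ((k : ℝ) - z) + T' i) d

/-- The CDF `F(s) = 1 - exp(-θ s)` for `s ≥ 0`, and `F(s) = 0` for `s < 0`. -/
noncomputable def Fcdf (θ s : ℝ) : ℝ := if 0 ≤ s then 1 - Real.exp (-θ * s) else 0

/-- The threshold `t_i = max( ((i-z)/(k-z))(t - c/(i-z)), 0 )`, with `i` given as a real. -/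
noncomputable def tThr (k z : ℕ) (c t i : ℝ) : ℝ :=
  max (((i - z) / ((k : ℝ) - z)) * (t - c / (i - z))) 0

/-!
Write `N(u) = #{i | T'ᵢ ≤ u}` and let `s_d` be the threshold `t_d` without its truncation at `0`.
Since `T_(d) ≤ x` iff at least `d` service times are `≤ x`, `α_d T_(d) ≤ t` iff `N(s_d) ≥ d`, so
`T_SC ≤ t` iff `N(s_k) ≥ k ∨ N(s_{k+1}) ≥ k+1 ∨ N(s_{k+2}) ≥ k+2`. As `N` is monotone and
`N ≤ k+2`, this event is the union of `A = {N(s_{k+2}) = k+2}`, `D = {N(s_k) = N(s_{k+1}) = k}`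
and `B = {N(s_{k+1}) = N(s_{k+2}) = k+1}`, where `B` is disjoint from `A ∪ D` and
`A ∩ D = {N(s_k) = N(s_{k+1}) = k, N(s_{k+2}) = k+2}`. Each of `A`, `B`, `D`, `A ∩ D` says that
all `T'ᵢ` lie in `P ∪ Q` and exactly `m` of them in `Q`, for two disjoint intervals `P`, `Q`; by
independence such an event has probability `C(n, m) q^m p^(n-m)`.
-/

theorem List.Pairwise.getElem_le_iff_lt_countP {α : Type*} [LinearOrder α] {l : List α}
    (hl : l.Pairwise (· ≤ ·)) {m : ℕ} (hm : m < l.length) (s : α) :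
    l[m] ≤ s ↔ m < l.countP (· ≤ s) := by
  induction l generalizing m with
  | nil => simp at hm
  | cons a l ih =>
    obtain ⟨ha, hl⟩ := List.pairwise_cons.mp hl
    cases m with
    | zero =>
      refine ⟨fun h => List.countP_pos_iff.mpr ⟨a, by simp, by simpa using h⟩, fun h => ?_⟩
      obtain ⟨x, hx, hxs⟩ := List.countP_pos_iff.mp h
      rcases List.mem_cons.mp hx with rfl | hx
      · simpa using hxs
      · exact (ha x hx).trans (by simpa using hxs)
    | succ m =>
      rw [List.getElem_cons_succ, ih hl (by simpa using hm), List.countP_cons]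
      by_cases has : a ≤ s
      · simp [has]
      · have hnone : l.countP (· ≤ s) = 0 :=
          List.countP_eq_zero.mpr fun x hx hxs => has ((ha x hx).trans (by simpa using hxs))
        simp [has, hnone]

theorem orderStat_le_iff {n : ℕ} (f : Fin n → ℝ) {d : ℕ} (hd : 1 ≤ d) (hdn : d ≤ n) (s : ℝ) :
    orderStat f d ≤ s ↔ d ≤ #{i | f i ≤ s} := by
  have hcount : ((List.ofFn f).insertionSort (· ≤ ·)).countP (· ≤ s) = #{i | f i ≤ s} := by
    rw [(List.perm_insertionSort _ _).countP_eq, List.ofFn_eq_map, List.countP_map,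
      List.countP_eq_length_filter, Finset.card_def, Finset.filter_val]
    rfl
  have hlen : d - 1 < ((List.ofFn f).insertionSort (· ≤ ·)).length := by
    rw [List.length_insertionSort, List.length_ofFn]; omega
  rw [orderStat, List.getD_eq_getElem _ _ hlen,
    (List.pairwise_insertionSort _ _).getElem_le_iff_lt_countP hlen, hcount]
  omega

/-- The paper's `t_d` without the truncation at `0`, which `Fcdf` does not see. -/
noncomputable def staircaseThreshold (k z : ℕ) (c t d : ℝ) : ℝ :=
  ((d - z) / ((k : ℝ) - z)) * (t - c / (d - z))

theorem tThr_eq_max (k z : ℕ) (c t d : ℝ) :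
    tThr k z c t d = max (staircaseThreshold k z c t d) 0 := rfl

theorem Fcdf_max_zero (θ s : ℝ) : Fcdf θ (max s 0) = Fcdf θ s := by
  rcases lt_or_ge s 0 with hs | hs
  · simp [Fcdf, max_eq_right hs.le, not_le.mpr hs]
  · rw [max_eq_left hs]

theorem staircaseThreshold_eq {k z : ℕ} {d : ℝ} (hzd : (z : ℝ) < d) (c t : ℝ) :
    staircaseThreshold k z c t d = (t * (d - z) - c) / (k - z) := by
  rw [staircaseThreshold]
  field_simp [(sub_pos.mpr hzd).ne']

theorem staircaseThreshold_mono {k z : ℕ} (hzk : z < k) {c t : ℝ} (ht : 0 ≤ t) {d d' : ℝ}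
    (hzd : (z : ℝ) < d) (hdd' : d ≤ d') :
    staircaseThreshold k z c t d ≤ staircaseThreshold k z c t d' := by
  rw [staircaseThreshold_eq hzd, staircaseThreshold_eq (hzd.trans_le hdd')]
  gcongr
  exact sub_nonneg.mpr (by exact_mod_cast hzk.le)

theorem scaled_orderStat_le_iff {n k z d : ℕ} (hzk : z < k) (hkd : k ≤ d) (hdn : d ≤ n)
    (c t : ℝ) (T' : Fin n → ℝ) :
    ((k : ℝ) - z) / ((d : ℝ) - z) * orderStat (fun i => c / ((k : ℝ) - z) + T' i) d ≤ t ↔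
      d ≤ #{i | T' i ≤ staircaseThreshold k z c t d} := by
  have hkz : (0 : ℝ) < k - z := sub_pos.mpr (by exact_mod_cast hzk)
  have hdz : (0 : ℝ) < d - z := sub_pos.mpr (by exact_mod_cast hzk.trans_le hkd)
  have hthr : staircaseThreshold k z c t d = t / ((k - z) / (d - z)) - c / (k - z) := by
    rw [staircaseThreshold]
    field_simp
  rw [mul_comm, ← le_div_iff₀ (div_pos hkz hdz), orderStat_le_iff _ (by omega) hdn, hthr]
  simp only [le_sub_iff_add_le']

theorem TSC_le_iff {k z : ℕ} (hzk : z < k) (c t : ℝ) (T' : Fin (k + 2) → ℝ) :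
    TSC (k + 2) k z (Nat.le_add_right k 2) c T' ≤ t ↔
      k ≤ #{i | T' i ≤ staircaseThreshold k z c t k} ∨
      k + 1 ≤ #{i | T' i ≤ staircaseThreshold k z c t (k + 1)} ∨
      k + 2 ≤ #{i | T' i ≤ staircaseThreshold k z c t (k + 2)} := by
  have hIcc : Finset.Icc k (k + 2) = {k, k + 1, k + 2} := by
    ext d
    simp only [Finset.mem_Icc, Finset.mem_insert, Finset.mem_singleton]
    omega
  simp only [TSC, Finset.inf'_le_iff, hIcc, Finset.exists_mem_insert, Finset.mem_singleton,
    exists_eq_left]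
  rw [scaled_orderStat_le_iff (d := k) hzk le_rfl (by omega),
    scaled_orderStat_le_iff (d := k + 1) hzk (by omega) (by omega),
    scaled_orderStat_le_iff (d := k + 2) hzk (by omega) le_rfl]
  push_cast
  rfl

section Counting

variable {ι α β : Type*} [Fintype ι] [LinearOrder β]

theorem forall_mem_union_iff_card_add_card {P Q : Set α} [DecidablePred (· ∈ P)]
    [DecidablePred (· ∈ Q)] (hPQ : Disjoint P Q) (x : ι → α) :
    (∀ i, x i ∈ P ∪ Q) ↔ #{i | x i ∈ P} + #{i | x i ∈ Q} = Fintype.card ι := by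
  classical
  rw [← Finset.card_union_of_disjoint (Finset.disjoint_filter_filter' _ _ ?_),
    ← Finset.filter_or, ← Finset.card_univ, Finset.card_filter_eq_iff]
  · simp
  · exact hPQ.preimage x

theorem filter_mem_eq_of_forall_mem_ite {P Q : Set α} [DecidablePred (· ∈ Q)] [DecidableEq ι]
    (hPQ : Disjoint P Q) {x : ι → α} {s : Finset ι} (h : ∀ i, x i ∈ if i ∈ s then Q else P) :
    ({i | x i ∈ Q} : Finset ι) = s := by
  ext i
  specialize h i
  split_ifs at h with hi
  · simpa [hi] using h
  · simpa [hi] using hPQ.notMem_of_mem_left h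

theorem card_filter_le_add_card_filter_lt (f : ι → β) (u : β) :
    #{i | f i ≤ u} + #{i | u < f i} = Fintype.card ι := by
  simp_rw [← not_le]
  exact Finset.card_filter_add_card_filter_not _

theorem card_filter_le_add_card_filter_lt_and_le (f : ι → β) {u v : β} (huv : u ≤ v) :
    #{i | f i ≤ u} + #{i | u < f i ∧ f i ≤ v} = #{i | f i ≤ v} := by
  rw [← Finset.card_filter_add_card_filter_not (s := {i | f i ≤ v}) (fun i => f i ≤ u),
    Finset.filter_filter, Finset.filter_filter]
  congr 2 <;> ext i <;> simp only [Finset.mem_filter, Finset.mem_univ, true_and, not_le]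
  · exact ⟨fun h => ⟨h.trans huv, h⟩, And.right⟩
  · exact And.comm

theorem forall_le_or_lt_iff_card_add_card (f : ι → β) {u v : β} (huv : u ≤ v) :
    (∀ i, f i ≤ u ∨ v < f i) ↔ #{i | f i ≤ u} + #{i | v < f i} = Fintype.card ι := by
  simpa using forall_mem_union_iff_card_add_card (Set.Iic_disjoint_Ioi huv) f

theorem forall_le_or_lt_and_le_iff_card_add_card (f : ι → β) {u v w : β} (huv : u ≤ v) :
    (∀ i, f i ≤ u ∨ v < f i ∧ f i ≤ w) ↔
      #{i | f i ≤ u} + #{i | v < f i ∧ f i ≤ w} = Fintype.card ι := by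
  simpa using forall_mem_union_iff_card_add_card (Set.Iic_disjoint_Ioc (c := w) huv) f

end Counting

def binomialEvent {Ω ι α : Type*} [Fintype ι] (X : ι → Ω → α) (P Q : Set α)
    [DecidablePred (· ∈ Q)] (m : ℕ) : Set Ω :=
  {ω | (∀ i, X i ω ∈ P ∪ Q) ∧ #{i | X i ω ∈ Q} = m}

section Binomial

variable {Ω ι α : Type*} [Fintype ι] [DecidableEq ι] {X : ι → Ω → α} {P Q : Set α}
  [DecidablePred (· ∈ Q)]

theorem binomialEvent_eq_biUnion (hPQ : Disjoint P Q) (m : ℕ) :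
    binomialEvent X P Q m =
      ⋃ s ∈ Finset.powersetCard m Finset.univ, ⋂ i, X i ⁻¹' (if i ∈ s then Q else P) := by
  ext ω
  simp only [binomialEvent, Set.mem_ofPred_eq, Set.mem_iUnion, Set.mem_iInter, Set.mem_preimage,
    Finset.mem_powersetCard, Finset.subset_univ, true_and, exists_prop]
  constructor
  · rintro ⟨hPQω, rfl⟩
    refine ⟨({i | X i ω ∈ Q} : Finset ι), rfl, fun i => ?_⟩
    split_ifs with hi
    · simpa using hi
    · exact (hPQω i).resolve_right (by simpa using hi)
  · rintro ⟨s, rfl, hs⟩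
    refine ⟨fun i => ?_, by rw [filter_mem_eq_of_forall_mem_ite hPQ hs]⟩
    have := hs i
    split_ifs at this
    exacts [Or.inr this, Or.inl this]

theorem measurableSet_binomialEvent [MeasurableSpace Ω] [MeasurableSpace α]
    (hX : ∀ i, Measurable (X i)) (hP : MeasurableSet P) (hQ : MeasurableSet Q)
    (hPQ : Disjoint P Q) (m : ℕ) :
    MeasurableSet (binomialEvent X P Q m) := by
  rw [binomialEvent_eq_biUnion hPQ]
  exact Finset.measurableSet_biUnion _ fun s _ =>
    MeasurableSet.iInter fun i => hX i (by split_ifs <;> assumption)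

theorem measureReal_binomialEvent [MeasurableSpace Ω] [MeasurableSpace α]
    {μ : Measure Ω} [IsFiniteMeasure μ] (hX : ∀ i, Measurable (X i))
    (hind : iIndepFun X μ) (hP : MeasurableSet P) (hQ : MeasurableSet Q) (hPQ : Disjoint P Q)
    {p q : ℝ} (hp : ∀ i, μ.real (X i ⁻¹' P) = p) (hq : ∀ i, μ.real (X i ⁻¹' Q) = q) (m : ℕ) :
    μ.real (binomialEvent X P Q m) =
      (Fintype.card ι).choose m * q ^ m * p ^ (Fintype.card ι - m) := by
  have hcell : ∀ (s : Finset ι) i, MeasurableSet (if i ∈ s then Q else P) := fun s i => by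
    split_ifs <;> assumption
  have hpiece : ∀ s : Finset ι,
      μ.real (⋂ i, X i ⁻¹' (if i ∈ s then Q else P)) = q ^ #s * p ^ (Fintype.card ι - #s) := by
    intro s
    rw [measureReal_def, hind.meas_iInter fun i => ⟨_, hcell s i, rfl⟩, ENNReal.toReal_prod,
      ← Finset.prod_mul_prod_compl s, ← Finset.card_compl]
    congr 1
    · rw [Finset.prod_congr rfl fun i hi => by rw [if_pos hi, ← measureReal_def, hq],
        Finset.prod_const]
    · rw [Finset.prod_congr rfl fun i hi => by
        rw [if_neg (Finset.mem_compl.mp hi), ← measureReal_def, hp], Finset.prod_const]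
  have hdisj : Set.PairwiseDisjoint
      (Finset.powersetCard m (Finset.univ : Finset ι) : Set (Finset ι))
      fun s => ⋂ i, X i ⁻¹' (if i ∈ s then Q else P) :=
    fun s _ s' _ hss' => Set.disjoint_left.mpr fun ω hω hω' => hss' <|
      (filter_mem_eq_of_forall_mem_ite (x := (X · ω)) hPQ (Set.mem_iInter.mp hω)).symm.trans
        (filter_mem_eq_of_forall_mem_ite (x := (X · ω)) hPQ (Set.mem_iInter.mp hω'))
  rw [binomialEvent_eq_biUnion hPQ, measureReal_biUnion_finset hdisj
    fun s _ => MeasurableSet.iInter fun i => hX i (hcell s i)]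
  rw [Finset.sum_congr rfl fun s hs => by rw [hpiece, (Finset.mem_powersetCard.mp hs).2],
    Finset.sum_const, Finset.card_powersetCard, Finset.card_univ, nsmul_eq_mul, mul_assoc]

end Binomial

section CDF

variable {Ω : Type*} [MeasurableSpace Ω] {μ : Measure Ω} [IsProbabilityMeasure μ] {X : Ω → ℝ}
  {F : ℝ → ℝ}

theorem measureReal_preimage_Ioi_of_cdf (hX : Measurable X)
    (hF : ∀ u, μ.real (X ⁻¹' Set.Iic u) = F u) (u : ℝ) :
    μ.real (X ⁻¹' Set.Ioi u) = 1 - F u := by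
  rw [← Set.compl_Iic, Set.preimage_compl, probReal_compl_eq_one_sub (hX measurableSet_Iic), hF]

theorem measureReal_preimage_Ioc_of_cdf (hX : Measurable X)
    (hF : ∀ u, μ.real (X ⁻¹' Set.Iic u) = F u) {u v : ℝ} (huv : u ≤ v) :
    μ.real (X ⁻¹' Set.Ioc u v) = F v - F u := by
  rw [eq_sub_iff_add_eq', ← hF, ← hF, ← Set.Iic_union_Ioc_eq_Iic huv, Set.preimage_union,
    measureReal_union ((Set.Iic_disjoint_Ioc le_rfl).preimage X) (hX measurableSet_Ioc)]

theorem measureReal_preimage_Iic_eq_Fcdf (hX : Measurable X) {θ : ℝ}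
    (hccdf : ∀ t : ℝ, 0 ≤ t → μ {ω | t < X ω} = ENNReal.ofReal (Real.exp (-θ * t))) (u : ℝ) :
    μ.real (X ⁻¹' Set.Iic u) = Fcdf θ u := by
  have hIic : ∀ t, 0 ≤ t → μ.real (X ⁻¹' Set.Iic t) = 1 - Real.exp (-θ * t) := fun t ht => by
    rw [← Set.compl_Ioi, Set.preimage_compl, probReal_compl_eq_one_sub (hX measurableSet_Ioi),
      measureReal_def, show X ⁻¹' Set.Ioi t = {ω | t < X ω} from rfl, hccdf t ht,
      ENNReal.toReal_ofReal (exp_pos _).le]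
  rw [Fcdf]
  split_ifs with hu
  · exact hIic u hu
  · refine le_antisymm ?_ measureReal_nonneg
    calc μ.real (X ⁻¹' Set.Iic u) ≤ μ.real (X ⁻¹' Set.Iic 0) :=
          measureReal_mono (Set.preimage_mono (Set.Iic_subset_Iic.mpr (not_le.mp hu).le))
      _ = 0 := by simp [hIic 0 le_rfl]

end CDF

theorem staircase_event_decomposition {Ω : Type*} {k : ℕ} (X : Fin (k + 2) → Ω → ℝ)
    {u₁ u₂ u₃ : ℝ} (h₁₂ : u₁ ≤ u₂) (h₂₃ : u₂ ≤ u₃) :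
    {ω | k ≤ #{i | X i ω ≤ u₁} ∨ k + 1 ≤ #{i | X i ω ≤ u₂} ∨ k + 2 ≤ #{i | X i ω ≤ u₃}} =
        (binomialEvent X (Set.Iic u₃) (Set.Ioi u₃) 0 ∪
          binomialEvent X (Set.Iic u₁) (Set.Ioi u₂) 2) ∪
        binomialEvent X (Set.Iic u₂) (Set.Ioi u₃) 1 ∧
      binomialEvent X (Set.Iic u₃) (Set.Ioi u₃) 0 ∩ binomialEvent X (Set.Iic u₁) (Set.Ioi u₂) 2 =
        binomialEvent X (Set.Iic u₁) (Set.Ioc u₂ u₃) 2 ∧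
      Disjoint (binomialEvent X (Set.Iic u₃) (Set.Ioi u₃) 0 ∪
          binomialEvent X (Set.Iic u₁) (Set.Ioi u₂) 2)
        (binomialEvent X (Set.Iic u₂) (Set.Ioi u₃) 1) := by
  refine ⟨Set.ext fun ω => ?_, Set.ext fun ω => ?_, Set.disjoint_left.mpr fun ω hω hω' => ?_⟩ <;>
  · have := Fintype.card_fin (k + 2)
    have := card_filter_le_add_card_filter_lt (X · ω) u₁
    have := card_filter_le_add_card_filter_lt (X · ω) u₂
    have := card_filter_le_add_card_filter_lt (X · ω) u₃
    have := card_filter_le_add_card_filter_lt_and_le (X · ω) h₁₂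
    have := card_filter_le_add_card_filter_lt_and_le (X · ω) h₂₃
    simp only [binomialEvent, Set.mem_union, Set.mem_inter_iff, Set.mem_ofPred_eq, Set.mem_Iic,
      Set.mem_Ioi, Set.mem_Ioc, forall_le_or_lt_iff_card_add_card _ le_rfl,
      forall_le_or_lt_iff_card_add_card _ h₁₂, forall_le_or_lt_iff_card_add_card _ h₂₃,
      forall_le_or_lt_and_le_iff_card_add_card _ h₁₂] at *
    omega

theorem measureReal_staircase_event {Ω : Type*} [MeasurableSpace Ω] {μ : Measure Ω}
    [IsProbabilityMeasure μ] {k : ℕ} {X : Fin (k + 2) → Ω → ℝ} (hX : ∀ i, Measurable (X i))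
    (hind : iIndepFun X μ) {F : ℝ → ℝ} (hF : ∀ i u, μ.real (X i ⁻¹' Set.Iic u) = F u)
    {u₁ u₂ u₃ : ℝ} (h₁₂ : u₁ ≤ u₂) (h₂₃ : u₂ ≤ u₃) :
    μ.real {ω | k ≤ #{i | X i ω ≤ u₁} ∨ k + 1 ≤ #{i | X i ω ≤ u₂} ∨
        k + 2 ≤ #{i | X i ω ≤ u₃}} =
      F u₃ ^ (k + 2) + (k + 2) * (1 - F u₃) * F u₂ ^ (k + 1) +
        (k + 2).choose 2 * ((1 - F u₂) ^ 2 - (F u₃ - F u₂) ^ 2) * F u₁ ^ k := by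
  obtain ⟨hE, hAD, hdisj⟩ := staircase_event_decomposition X h₁₂ h₂₃
  have hIoi : ∀ i u, μ.real (X i ⁻¹' Set.Ioi u) = 1 - F u := fun i =>
    measureReal_preimage_Ioi_of_cdf (hX i) (hF i)
  have hA := measureReal_binomialEvent hX hind measurableSet_Iic measurableSet_Ioi
    (Set.Iic_disjoint_Ioi le_rfl) (hF · u₃) (hIoi · u₃) 0
  have hB := measureReal_binomialEvent hX hind measurableSet_Iic measurableSet_Ioi
    (Set.Iic_disjoint_Ioi h₂₃) (hF · u₂) (hIoi · u₃) 1
  have hD := measureReal_binomialEvent hX hind measurableSet_Iic measurableSet_Ioi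
    (Set.Iic_disjoint_Ioi h₁₂) (hF · u₁) (hIoi · u₂) 2
  have hAD' := measureReal_binomialEvent hX hind measurableSet_Iic measurableSet_Ioc
    (Set.Iic_disjoint_Ioc h₁₂) (hF · u₁)
    (fun i => measureReal_preimage_Ioc_of_cdf (hX i) (hF i) h₂₃) 2
  rw [hE, measureReal_union hdisj (measurableSet_binomialEvent hX measurableSet_Iic
      measurableSet_Ioi (Set.Iic_disjoint_Ioi h₂₃) 1),
    eq_sub_of_add_eq (measureReal_union_add_inter (measurableSet_binomialEvent hX
      measurableSet_Iic measurableSet_Ioi (Set.Iic_disjoint_Ioi h₁₂) 2)),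
    hAD, hA, hB, hD, hAD']
  simp only [Fintype.card_fin, Nat.choose_zero_right, Nat.choose_one_right]
  push_cast
  ring

/-- exact CDF of the Master's waiting time for a `(k+2,k,z)` system
(up to two stragglers) using Staircase codes. -/
theorem staircase_waiting_time_cdf_two_stragglers
    {Ω : Type*} [MeasurableSpace Ω] (μ : Measure Ω) [IsProbabilityMeasure μ]
    (k z : ℕ) (hzk : z < k)
    (lam c : ℝ)
    (T' : Fin (k + 2) → Ω → ℝ)
    (hmeas : ∀ i, Measurable (T' i))
    (hindep : iIndepFun T' μ)
    (hccdf : ∀ i, ∀ t : ℝ, 0 ≤ t →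
      μ {ω | t < T' i ω} = ENNReal.ofReal (Real.exp (-(lam * ((k : ℝ) - z)) * t))) :
    ∀ t : ℝ, 0 < t →
      (μ {ω | TSC (k + 2) k z (by omega) c (fun i => T' i ω) ≤ t}).toReal =
        Fcdf (lam * ((k : ℝ) - z)) (tThr k z c t ((k : ℝ) + 2)) ^ (k + 2)
          + ((k : ℝ) + 2) * (1 - Fcdf (lam * ((k : ℝ) - z)) (tThr k z c t ((k : ℝ) + 2))) *
            (Fcdf (lam * ((k : ℝ) - z)) (tThr k z c t ((k : ℝ) + 1)) ^ (k + 1)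
              + ((k : ℝ) + 1) * Fcdf (lam * ((k : ℝ) - z)) (tThr k z c t (k : ℝ)) ^ k *
                ((1 - Fcdf (lam * ((k : ℝ) - z)) (tThr k z c t ((k : ℝ) + 1)))
                  - (1 / 2) * (1 - Fcdf (lam * ((k : ℝ) - z)) (tThr k z c t ((k : ℝ) + 2))))) := by
  intro t ht
  have hmono : ∀ d d' : ℝ, (k : ℝ) ≤ d → d ≤ d' →
      staircaseThreshold k z c t d ≤ staircaseThreshold k z c t d' := fun d d' hd hdd' =>
    staircaseThreshold_mono hzk ht.le ((Nat.cast_lt.mpr hzk).trans_le hd) hdd'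
  simp only [← measureReal_def, TSC_le_iff hzk]
  rw [measureReal_staircase_event hmeas hindep
      (fun i => measureReal_preimage_Iic_eq_Fcdf (hmeas i) (hccdf i))
      (hmono _ _ le_rfl (by linarith)) (hmono _ _ (by linarith) (by linarith))]
  simp only [tThr_eq_max, Fcdf_max_zero, Nat.cast_choose_two]
  push_cast
  ring
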